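/- Let A ∈ M_m ⊗ M_m be of the form A = ∑_{i,j} E_{ij} ⊗ a_{ij} E_{ji} with a_{ij} ≥ 0, and suppose that for all i,j, a_{ij} = 0 implies a_{ji} = 0. Then A is diagonalizable over ℂ. -/

import Mathlib

open Matrix Kronecker BigOperators

/-!
The matrix `A` sends `e_{(j,i)}` to `a_{ij} e_{(i,j)}`, so it is a weighted permutation matrix
of the involution `(i,j) ↦ (j,i)`. Conjugating by the diagonal matrix with entries `√a_{ij}`
turns it into the real symmetric matrix with entries `√(a_{ij} a_{ji})` at the positions
`((i,j),(j,i))`; where `a_{ij} = 0` this needs `a_{ji} = 0` as well. The spectral theorem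
diagonalizes the symmetric matrix.
-/

namespace Matrix

variable {n : Type*} [DecidableEq n]

theorem isHermitian_of_apply_eq_ite_involutive {𝕜 : Type*} [RCLike 𝕜] {σ : n → n}
    (hσ : Function.Involutive σ) (w : n → 𝕜) (hw : ∀ p, w (σ p) = star (w p)) :
    (of fun p q => if q = σ p then w p else 0).IsHermitian := by
  ext p q
  simp only [conjTranspose_apply, of_apply]
  by_cases hq : q = σ p
  · subst hq
    simp [hσ p, hw]
  · have hp : p ≠ σ q := fun h => hq (h ▸ (hσ q).symm)
    simp [hq, hp]

variable [Fintype n]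

def IsDiagonalizable {R : Type*} [CommRing R] (A : Matrix n n R) : Prop :=
  ∃ P D : Matrix n n R, IsUnit P ∧ D.IsDiag ∧ A = P * D * P⁻¹

theorem IsDiagonalizable.conj {R : Type*} [CommRing R] {A : Matrix n n R}
    (hA : A.IsDiagonalizable) {Q : Matrix n n R} (hQ : IsUnit Q) :
    (Q * A * Q⁻¹).IsDiagonalizable := by
  obtain ⟨P, D, hP, hD, rfl⟩ := hA
  refine ⟨Q * P, D, hQ.mul hP, hD, ?_⟩
  rw [mul_inv_rev]
  simp only [Matrix.mul_assoc]

theorem IsHermitian.isDiagonalizable {𝕜 : Type*} [RCLike 𝕜] {A : Matrix n n 𝕜}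
    (hA : A.IsHermitian) : A.IsDiagonalizable := by
  set U := hA.eigenvectorUnitary
  have hUinv : (U : Matrix n n 𝕜)⁻¹ = star U := inv_eq_left_inv (Unitary.coe_star_mul_self U)
  refine ⟨U, diagonal (RCLike.ofReal ∘ hA.eigenvalues), Unitary.isUnit_coe,
    isDiag_diagonal _, ?_⟩
  rw [hUinv]
  exact hA.spectral_theorem

theorem isDiagonalizable_of_apply_eq_ite_involutive {𝕜 : Type*} [RCLike 𝕜] {σ : n → n}
    (hσ : Function.Involutive σ) {c : n → ℝ} (hc : ∀ p, 0 ≤ c p)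
    (hc0 : ∀ p, c p = 0 → c (σ p) = 0) {A : Matrix n n 𝕜}
    (hA : ∀ p q, A p q = if q = σ p then (c p : 𝕜) else 0) :
    A.IsDiagonalizable := by
  -- the value `1` where `c` vanishes only keeps the rescaling invertible
  set d : n → ℝ := fun p => if c p = 0 then 1 else √(c p)
  set w : n → ℝ := fun p => √(c p) * √(c (σ p))
  have hd : ∀ p, d p ≠ 0 := by
    intro p
    by_cases h : c p = 0
    · simp [d, h]
    · simp [d, h, Real.sqrt_ne_zero'.2 ((hc p).lt_of_ne' h)]
  have hQ : IsUnit (diagonal fun p => (d p : 𝕜)) :=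
    isUnit_diagonal.2 <| Pi.isUnit_iff.2 fun p => (RCLike.ofReal_ne_zero.2 (hd p)).isUnit
  have hM := isHermitian_of_apply_eq_ite_involutive hσ (fun p => (w p : 𝕜))
    (fun p => by simp [w, hσ p, mul_comm])
  have hscale : ∀ p, c p * d (σ p) = d p * w p := by
    intro p
    by_cases h : c p = 0
    · simp [w, h]
    · have h' : c (σ p) ≠ 0 := fun h' => h (hσ p ▸ hc0 _ h')
      simp only [d, w, h, h', if_false, ← mul_assoc, Real.mul_self_sqrt (hc p)]
  have hAQ : A * diagonal (fun p => (d p : 𝕜)) =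
      diagonal (fun p => (d p : 𝕜)) * of fun p q => if q = σ p then (w p : 𝕜) else 0 := by
    ext p q
    rw [mul_diagonal, diagonal_mul, hA, of_apply]
    split_ifs with h
    · subst h
      exact_mod_cast hscale p
    · simp
  have hAeq : A = diagonal (fun p => (d p : 𝕜)) *
      (of fun p q => if q = σ p then (w p : 𝕜) else 0) * (diagonal fun p => (d p : 𝕜))⁻¹ := by
    rw [← hAQ, mul_nonsing_inv_cancel_right _ _ ((isUnit_iff_isUnit_det _).1 hQ)]
  rw [hAeq]
  exact hM.isDiagonalizable.conj hQ

theorem sum_single_kronecker_single_apply {m α : Type*} [Fintype m] [DecidableEq m] [Semiring α]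
    (a : m → m → α) (p q : m × m) :
    (∑ i, ∑ j, single i j (1 : α) ⊗ₖ single j i (a i j)) p q =
      if q = p.swap then a p.1 p.2 else 0 := by
  simp only [single_kronecker_single, one_mul]
  rw [← Fintype.sum_prod_type' (f := fun i j => single (i, j) (j, i) (a i j))]
  simp only [Matrix.sum_apply, single_apply]
  rw [Finset.sum_eq_single p] <;> grind

end Matrix

/-- If `A = ∑_{i,j} E_{ij} ⊗ a_{ij} E_{ji}` with `a_{ij} ≥ 0` and `a_{ij} = 0 → a_{ji} = 0`,
then `A` is diagonalizable over `ℂ`: it is similar to a diagonal matrix. -/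
theorem diagonalizable_of_star_form (m : ℕ) (a : Fin m → Fin m → ℝ)
    (ha : ∀ i j, 0 ≤ a i j) (hsym : ∀ i j, a i j = 0 → a j i = 0)
    (A : Matrix (Fin m × Fin m) (Fin m × Fin m) ℂ)
    (hA : A = ∑ i : Fin m, ∑ j : Fin m,
      (single i j (1 : ℂ)) ⊗ₖ (single j i ((a i j : ℝ) : ℂ))) :
    ∃ P D : Matrix (Fin m × Fin m) (Fin m × Fin m) ℂ,
      IsUnit P ∧ D.IsDiag ∧ A = P * D * P⁻¹ :=
  isDiagonalizable_of_apply_eq_ite_involutive (σ := Prod.swap) Prod.swap_swap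
    (c := fun p => a p.1 p.2) (fun p => ha _ _) (fun p => hsym _ _) fun p q => by
      rw [hA, sum_single_kronecker_single_apply]
      -- the two casts `ℝ → ℂ` (`RCLike.ofReal` and `Complex.ofReal`) agree definitionally
      rfl
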